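/- arXiv:2407.02619 — 2 statements merged into one kernel-verified Lean document; each statement's English description precedes it below -/
import Mathlib

section
/- Over K = ℝ with the trivial absolute value, every signed seminorm on a finite-dimensional real vector space V is diagonalizable: it equals ||·||_{B,c} for some ordered basis B = (b_1,…,b_n) and parameters c_1 ≥ … ≥ c_n ≥ 0, where ||Σλ_i b_i||_{B,c} = sgn(λ_j)·c_j for j minimal with |λ_j|_triv · c_j maximal (here |λ|_triv = 1 for λ ≠ 0). -/
noncomputable section

variable {K : Type*} [Field K] [LinearOrder K] [IsStrictOrderedRing K] {V : Type*} [AddCommGroup V] [Module K V]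

/-- The sign of an element of a linear ordered field, as a real number. -/
def sgn (x : K) : ℝ := if 0 < x then 1 else if x < 0 then -1 else 0

/-- The trivial absolute value. -/
def trivabs (x : K) : ℝ := if x = 0 then 0 else 1

/-- `K` is real closed. -/
def IsRealClosed' (K : Type*) [Field K] [LinearOrder K] [IsStrictOrderedRing K] : Prop :=
  (∀ x : K, 0 ≤ x → ∃ y, y * y = x) ∧
  ∀ p : Polynomial K, Odd p.natDegree → ∃ x, p.eval x = 0

/-- A signed seminorm on `V` with respect to the trivial absolute value on `K`
(note `sgn c * trivabs c = sgn c`). -/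
def IsSignedSeminormTriv (N : V → ℝ) : Prop :=
  (∀ (c : K) (v : V), N (c • v) = sgn c * N v) ∧
  (∀ v w : V, min (N v) (N w) ≤ N (v + w) ∧ N (v + w) ≤ max (N v) (N w))

/-- `j` is the minimal index at which `a (lam j) * c j` attains its maximum. -/
def DiagAt {n : ℕ} (a : K → ℝ) (lam : Fin n → K) (c : Fin n → ℝ) (j : Fin n) : Prop :=
  (∀ i, a (lam i) * c i ≤ a (lam j) * c j) ∧
  (∀ i, i < j → a (lam i) * c i < a (lam j) * c j)

/-!
Let `c` be the maximum of `N`; it exists because `|N|` is bounded on a span by its bound on a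
spanning set. If `c = 0` then `N = 0`. Otherwise the ultrametric inequalities show that adding a
vector of `{N > -c}` to one of `{N = c}` stays in `{N = c}`, which makes `x₀ + ∑ x`, for `N x₀ = c`
and a finite spanning family with `N x ≥ 0`, an algebraic interior point `b` of the cone `{N = c}`.
The Riesz extension theorem for the cone `{N > -c}` then yields a linear form `f` with `f b = 1`
and `N = c` on `{f > 0}`, so `N x = sgn (f x) * c` off `ker f`. Induction on the dimension, applied
to `N` on `ker f`, gives a basis `b, b₂, …, bₙ` and weights `c ≥ c₂ ≥ … ≥ 0` such that
`N v = sgn λₖ * cₖ` at the first nonzero coordinate `λₖ` of `v`. The strict minimality clause of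
`DiagAt` rules out `j > k`, and `j < k` forces `cₖ = 0`.
-/

open Module Submodule Finset

lemma Fin.antitone_cons {α : Type*} [Preorder α] {n : ℕ} {a : α} {f : Fin n → α} :
    Antitone (Fin.cons a f : Fin (n + 1) → α) ↔ (∀ i, f i ≤ a) ∧ Antitone f := by
  simpa only [antitone_iff_forall_lt, Relator.LiftFun, ge_iff_le] using
    Fin.liftFun_cons (α := α) (· ≥ ·) (f := f) (a := a)

namespace Module.Basis

variable {R M : Type*} [Ring R] [AddCommGroup M] [Module R M] {n : ℕ} (f : M →ₗ[R] R) {b : M}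
  (hb : f b = 1) (B : Basis (Fin n) R (LinearMap.ker f))
include hb

noncomputable def consKer : Basis (Fin (n + 1)) R M :=
  mkFinCons b B (fun t x hx h => by simpa [hb, LinearMap.mem_ker.1 hx] using congr_arg f h)
    fun z => ⟨-f z, by simp [hb]⟩

lemma consKer_repr (v : M) :
    ⇑((consKer f hb B).repr v) = Fin.cons (f v) (B.repr ⟨v - f v • b, by simp [hb]⟩) := by
  set u : LinearMap.ker f := ⟨v - f v • b, by simp [hb]⟩
  have hv : ∑ i, (Fin.cons (f v) (B.repr u) : Fin (n + 1) → R) i • consKer f hb B i = v := by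
    have := congr_arg Subtype.val (B.sum_repr u)
    simp only [consKer, coe_mkFinCons, Fin.sum_univ_succ, Fin.cons_zero, Fin.cons_succ,
      Function.comp_apply, AddSubmonoidClass.coe_finsetSum, SetLike.val_smul, u] at this ⊢
    rw [this, add_sub_cancel]
  conv_lhs => rw [← hv]
  exact (consKer f hb B).repr_sum_self _

end Module.Basis

section
omit [IsStrictOrderedRing K]

lemma sgn_of_pos {x : K} (h : 0 < x) : sgn x = 1 := by simp [sgn, h]

lemma sgn_of_neg {x : K} (h : x < 0) : sgn x = -1 := by simp [sgn, h, h.not_gt]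

@[simp] lemma sgn_zero : sgn (0 : K) = 0 := by simp [sgn]

lemma abs_sgn_le_one (x : K) : |sgn x| ≤ 1 := by
  unfold sgn; split_ifs <;> simp

@[simp] lemma trivabs_zero : trivabs (0 : K) = 0 := if_pos rfl

lemma trivabs_of_ne_zero {x : K} (h : x ≠ 0) : trivabs x = 1 := if_neg h

lemma trivabs_le_one (x : K) : trivabs x ≤ 1 := by
  unfold trivabs; split_ifs <;> norm_num

lemma DiagAt.sgn_mul_eq {n : ℕ} {lam : Fin n → K} {c : Fin n → ℝ} {j k : Fin n}
    (hj : DiagAt trivabs lam c j) (hc : Antitone c) (hc₀ : ∀ i, 0 ≤ c i)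
    (hk : lam k ≠ 0) (hlt : ∀ i < k, lam i = 0) :
    sgn (lam j) * c j = sgn (lam k) * c k := by
  have hkj : c k ≤ trivabs (lam j) * c j := by
    simpa [trivabs_of_ne_zero hk] using hj.1 k
  rcases lt_trichotomy j k with hjk | rfl | hkj'
  · rw [hlt j hjk, trivabs_zero, zero_mul] at hkj
    simp [hlt j hjk, le_antisymm hkj (hc₀ k)]
  · rfl
  · have := hj.2 k hkj'
    rw [trivabs_of_ne_zero hk, one_mul] at this
    linarith [hc hkj'.le, mul_le_of_le_one_left (hc₀ j) (trivabs_le_one (lam j))]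

def IsLeadingTermBasis {n : ℕ} (N : V → ℝ) (B : Basis (Fin n) K V) (c : Fin n → ℝ) : Prop :=
  ∀ v k, B.repr v k ≠ 0 → (∀ i < k, B.repr v i = 0) → N v = sgn (B.repr v k) * c k

namespace IsSignedSeminormTriv

variable {N : V → ℝ} (hN : IsSignedSeminormTriv (K := K) N)
include hN

lemma map_zero : N 0 = 0 := by simpa using hN.1 0 0

lemma map_smul_of_pos {t : K} (ht : 0 < t) (v : V) : N (t • v) = N v := by
  rw [hN.1, sgn_of_pos ht, one_mul]

lemma lt_map_add {c : ℝ} {v w : V} (hv : c < N v) (hw : c < N w) : c < N (v + w) :=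
  (lt_min hv hw).trans_le (hN.2 v w).1

lemma abs_map_add_le (v w : V) : |N (v + w)| ≤ max |N v| |N w| := by
  obtain ⟨hmin, hmax⟩ := hN.2 v w
  rw [abs_le]
  refine ⟨le_trans (le_min ?_ ?_) hmin, hmax.trans (max_le_max (le_abs_self _) (le_abs_self _))⟩
  · linarith [neg_abs_le (N v), le_max_left |N v| |N w|]
  · linarith [neg_abs_le (N w), le_max_right |N v| |N w|]

lemma abs_map_smul_le (t : K) (v : V) : |N (t • v)| ≤ |N v| := by
  rw [hN.1, abs_mul]
  exact mul_le_of_le_one_left (abs_nonneg _) (abs_sgn_le_one t)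

lemma abs_map_le_of_mem_span {s : Set V} {r : ℝ} (hr : 0 ≤ r) (hs : ∀ x ∈ s, |N x| ≤ r)
    {v : V} (hv : v ∈ span K s) : |N v| ≤ r := by
  induction hv using Submodule.span_induction with
  | mem x hx => exact hs x hx
  | zero => simpa [hN.map_zero] using hr
  | add x y _ _ hx hy => exact (hN.abs_map_add_le x y).trans (max_le hx hy)
  | smul t x _ hx => exact (hN.abs_map_smul_le t x).trans hx

lemma comp_linearMap {W : Type*} [AddCommGroup W] [Module K W] (f : W →ₗ[K] V) :
    IsSignedSeminormTriv (K := K) (N ∘ f) :=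
  ⟨fun t w => by simp [hN.1], fun w w' => by simpa using hN.2 (f w) (f w')⟩

end IsSignedSeminormTriv

end

namespace IsSignedSeminormTriv

variable {N : V → ℝ} (hN : IsSignedSeminormTriv (K := K) N)
include hN

lemma map_neg (v : V) : N (-v) = -N v := by
  simpa [sgn_of_neg (neg_one_lt_zero : (-1 : K) < 0)] using hN.1 (-1) v

lemma map_add_of_forall_le {c : ℝ} (hmax : ∀ v, N v ≤ c) {x y : V} (hx : N x = c)
    (hy : -c < N y) : N (x + y) = c := by
  refine le_antisymm (hmax _) (not_lt.1 fun h => ?_)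
  have := (hN.2 (x + y) (-y)).2
  rw [add_neg_cancel_right, hx, hN.map_neg] at this
  exact this.not_gt (max_lt h (by linarith))

lemma exists_forall_le [Module.Finite K V] : ∃ x, ∀ v, N v ≤ N x := by
  classical
  obtain ⟨s, hs⟩ := Module.Finite.fg_top (R := K) (M := V)
  obtain ⟨x, -, hx⟩ :=
    (insert 0 s).exists_max_image (fun v => |N v|) ⟨0, mem_insert_self 0 s⟩
  have hbound (v : V) : |N v| ≤ |N x| :=
    hN.abs_map_le_of_mem_span (abs_nonneg _) (fun y hy => hx y (mem_insert_of_mem hy))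
      (by simp [hs])
  rcases le_total 0 (N x) with h | h
  · exact ⟨x, fun v => (le_abs_self _).trans ((hbound v).trans_eq (abs_of_nonneg h))⟩
  · refine ⟨-x, fun v => (le_abs_self _).trans ((hbound v).trans_eq ?_)⟩
    rw [hN.map_neg, abs_of_nonpos h]

lemma exists_finset_span_eq_top_forall_nonneg [Module.Finite K V] :
    ∃ s : Finset V, span K (s : Set V) = ⊤ ∧ ∀ x ∈ s, 0 ≤ N x := by
  classical
  obtain ⟨s, hs⟩ := Module.Finite.fg_top (R := K) (M := V)
  let flip (x : V) : V := if 0 ≤ N x then x else -x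
  refine ⟨s.image flip, eq_top_iff.2 (hs ▸ span_le.2 fun x hx => ?_), ?_⟩
  · have : flip x ∈ span K (s.image flip : Set V) := subset_span (mem_image_of_mem flip hx)
    by_cases h : 0 ≤ N x
    · simpa [flip, h] using this
    · simpa [flip, h] using neg_mem this
  · simp only [mem_image, forall_exists_index, and_imp, forall_apply_eq_imp_iff₂]
    intro x _
    by_cases h : 0 ≤ N x
    · simp [flip, h]
    · simp only [flip, h, if_false, hN.map_neg]; linarith

lemma exists_forall_exists_map_smul_add [Module.Finite K V] {c : ℝ} (hc : 0 < c)
    (hmax : ∀ v, N v ≤ c) {x₀ : V} (hx₀ : N x₀ = c) :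
    ∃ b, N b = c ∧ ∀ y, ∃ t : K, N (t • b + y) = c := by
  obtain ⟨s, hs, hs₀⟩ := hN.exists_finset_span_eq_top_forall_nonneg
  have key (t : K) (a : V → K) (ht : 0 < t) (ha : ∀ x ∈ s, 0 < t + a x) :
      N (t • x₀ + ∑ x ∈ s, (t + a x) • x) = c := by
    refine hN.map_add_of_forall_le hmax (by rw [hN.map_smul_of_pos ht, hx₀]) ?_
    refine sum_induction _ (fun v => -c < N v) (fun v w => hN.lt_map_add)
      (by rw [hN.map_zero]; linarith) fun x hx => ?_
    rw [hN.map_smul_of_pos (ha x hx)]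
    linarith [hs₀ x hx]
  refine ⟨x₀ + ∑ x ∈ s, x, by simpa using key 1 0 one_pos (by simp), fun y => ?_⟩
  obtain ⟨a, -, rfl⟩ := mem_span_finset.1 (hs ▸ mem_top : y ∈ span K (s : Set V))
  have ht : 0 < 1 + ∑ x ∈ s, |a x| := by positivity
  refine ⟨1 + ∑ x ∈ s, |a x|, ?_⟩
  convert key _ a ht fun x hx => ?_ using 2
  · simp only [smul_add, smul_sum, add_smul, sum_add_distrib, add_assoc]
  · linarith [single_le_sum (fun x _ => abs_nonneg (a x)) hx, neg_abs_le (a x)]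

end IsSignedSeminormTriv

lemma IsLeadingTermBasis.map_basis {n : ℕ} {N : V → ℝ} {B : Basis (Fin n) K V} {c : Fin n → ℝ}
    (h : IsLeadingTermBasis N B c) (i : Fin n) : N (B i) = c i := by
  simpa [sgn_of_pos one_pos] using h (B i) i (by simp) fun j hj => by simp [hj.ne]

lemma IsSignedSeminormTriv.isLeadingTermBasis_consKer {N : V → ℝ}
    (hN : IsSignedSeminormTriv (K := K) N) {f : V →ₗ[K] K} {b : V} (hb : f b = 1) {c₀ : ℝ}
    (hf : ∀ x, 0 < f x → N x = c₀) {n : ℕ} {B : Basis (Fin n) K (LinearMap.ker f)}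
    {c : Fin n → ℝ} (hB : IsLeadingTermBasis (N ∘ (LinearMap.ker f).subtype) B c) :
    IsLeadingTermBasis N (B.consKer f hb) (Fin.cons c₀ c) := by
  intro v k hk hlt
  simp only [Basis.consKer_repr] at hk hlt ⊢
  induction k using Fin.cases with
  | zero =>
    simp only [Fin.cons_zero] at hk ⊢
    rcases hk.lt_or_gt with hneg | hpos
    · have := hf (-v) (by simpa using hneg)
      rw [hN.map_neg] at this
      rw [sgn_of_neg hneg]
      linarith
    · rw [sgn_of_pos hpos, one_mul, hf v hpos]
  | succ j =>
    have hv : f v = 0 := by simpa using hlt 0 (Fin.succ_pos j)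
    simp only [Fin.cons_succ] at hk ⊢
    have := hB _ j hk fun i hi => by simpa using hlt i.succ (Fin.succ_lt_succ_iff.2 hi)
    simpa [hv] using this

section Real

variable {E : Type*} [AddCommGroup E] [Module ℝ E] {N : E → ℝ}

lemma IsSignedSeminormTriv.exists_linearMap_forall_pos [FiniteDimensional ℝ E]
    (hN : IsSignedSeminormTriv (K := ℝ) N) {c : ℝ} (hc : 0 < c) (hmax : ∀ v, N v ≤ c)
    {x₀ : E} (hx₀ : N x₀ = c) :
    ∃ (f : E →ₗ[ℝ] ℝ) (b : E), f b = 1 ∧ ∀ x, 0 < f x → N x = c := by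
  obtain ⟨b, hb, hcore⟩ := hN.exists_forall_exists_map_smul_add hc hmax hx₀
  have hb₀ : b ≠ 0 := by rintro rfl; rw [hN.map_zero] at hb; linarith
  -- Extend `t • b ↦ t` to a form `≥ 0` on `{N > -c}`; such a form is positive only where `N = c`.
  let C : ConvexCone ℝ E :=
    { carrier := {x | -c < N x}
      smul_mem' := fun t ht x hx => by
        simpa only [Set.mem_ofPred_eq, hN.map_smul_of_pos ht] using hx
      add_mem' := fun x hx y hy => hN.lt_map_add hx hy }
  have hC : C.Pointed := show -c < N 0 by rw [hN.map_zero]; linarith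
  let f₀ : E →ₗ.[ℝ] ℝ := LinearPMap.mkSpanSingleton b 1 hb₀
  have nonneg : ∀ x : f₀.domain, (x : E) ∈ C.toPointedCone hC → 0 ≤ f₀ x := by
    rintro ⟨_, hx⟩ hxC
    obtain ⟨t, rfl⟩ := mem_span_singleton.1 hx
    rw [LinearPMap.mkSpanSingleton'_apply, RingHom.id_apply, smul_eq_mul, mul_one]
    by_contra! ht
    have : -c < N (t • b) := hxC
    rw [hN.1, sgn_of_neg ht, hb] at this
    linarith
  have dense : ∀ y, ∃ x : f₀.domain, (x : E) + y ∈ C.toPointedCone hC := by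
    intro y
    obtain ⟨t, ht⟩ := hcore y
    refine ⟨⟨t • b, smul_mem _ t (mem_span_singleton_self b)⟩, ?_⟩
    show -c < N (t • b + y)
    linarith
  obtain ⟨g, hgf, hgC⟩ := riesz_extension (C.toPointedCone hC) f₀ nonneg dense
  refine ⟨g, b, (hgf _).trans (LinearPMap.mkSpanSingleton_apply ℝ ℝ hb₀ 1), fun x hx => ?_⟩
  have hxC : ¬-c < N (-x) := fun h => by
    have := hgC (-x) h
    rw [g.map_neg] at this
    linarith
  linarith [not_lt.1 hxC, hN.map_neg x, hmax x]

lemma IsSignedSeminormTriv.exists_isLeadingTermBasis [FiniteDimensional ℝ E]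
    (hN : IsSignedSeminormTriv (K := ℝ) N) :
    ∃ (B : Basis (Fin (finrank ℝ E)) ℝ E) (c : Fin (finrank ℝ E) → ℝ),
      Antitone c ∧ (∀ i, 0 ≤ c i) ∧ IsLeadingTermBasis N B c := by
  suffices ∀ n, finrank ℝ E = n → ∃ (B : Basis (Fin n) ℝ E) (c : Fin n → ℝ),
      Antitone c ∧ (∀ i, 0 ≤ c i) ∧ IsLeadingTermBasis N B c from this _ rfl
  intro n hn
  induction n generalizing E with
  | zero =>
    exact ⟨finBasisOfFinrankEq ℝ E hn, 0, antitone_const, fun _ => le_rfl, fun _ k => k.elim0⟩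
  | succ n ih =>
    obtain ⟨x₀, hx₀⟩ := hN.exists_forall_le
    rcases (hN.map_zero ▸ hx₀ 0 : 0 ≤ N x₀).eq_or_lt with h₀ | hpos
    · have hzero (v : E) : N v = 0 :=
        le_antisymm (h₀ ▸ hx₀ v) (by linarith [hN.map_neg v, hx₀ (-v)])
      exact ⟨finBasisOfFinrankEq ℝ E hn, 0, antitone_const, fun _ => le_rfl,
        fun v _ _ _ => by simp [hzero]⟩
    · obtain ⟨f, b, hb, hf⟩ := hN.exists_linearMap_forall_pos hpos hx₀ rfl
      have hker : finrank ℝ (LinearMap.ker f) = n := by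
        have := Module.Dual.finrank_ker_add_one_of_ne_zero (f := f) fun h => by simp [h] at hb
        omega
      obtain ⟨B, c, hc, hc₀, hB⟩ := ih (hN.comp_linearMap (LinearMap.ker f).subtype) hker
      refine ⟨B.consKer f hb, Fin.cons (N x₀) c, Fin.antitone_cons.2 ⟨fun i => ?_, hc⟩,
        Fin.cases hpos.le hc₀, hN.isLeadingTermBasis_consKer hb hf hB⟩
      exact hB.map_basis i ▸ hx₀ _

end Real

/-- Over `ℝ` with the trivial absolute value, every signed seminorm on a
finite-dimensional real vector space is diagonalizable. -/
theorem signedSeminorm_diagonalizable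
    {V : Type*} [AddCommGroup V] [Module ℝ V] [FiniteDimensional ℝ V]
    (N : V → ℝ) (hN : IsSignedSeminormTriv (K := ℝ) N) :
    ∃ (B : Module.Basis (Fin (Module.finrank ℝ V)) ℝ V) (c : Fin (Module.finrank ℝ V) → ℝ),
      Antitone c ∧ (∀ i, 0 ≤ c i) ∧
      ∀ (v : V) (j : Fin (Module.finrank ℝ V)),
        DiagAt trivabs (fun i => B.repr v i) c j → N v = sgn (B.repr v j) * c j := by
  obtain ⟨B, c, hc, hc₀, hB⟩ := hN.exists_isLeadingTermBasis
  refine ⟨B, c, hc, hc₀, fun v j hj => ?_⟩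
  by_cases hv : v = 0
  · simp [hv, hN.map_zero]
  obtain ⟨k, hk, hmin⟩ := wellFounded_lt.has_min {i | B.repr v i ≠ 0}
    (Finsupp.ne_iff.1 (B.repr.map_ne_zero_iff.2 hv))
  have hlt (i : Fin _) (hi : i < k) : B.repr v i = 0 := by_contra fun h => hmin i h hi
  rw [hB v k hk hlt, hj.sgn_mul_eq hc hc₀ hk hlt]
end
end

section
/- If ||·||^sgn is a signed seminorm on (K^{n+1})^* and λ_0,…,λ_m ∈ K satisfy Σ_i λ_i f_i = 0 for functionals f_0,…,f_m ∈ (K^{n+1})^* with not all λ_i ||f_i||^sgn zero, then there exist distinct indices i ≠ j such that |λ_i|·| ||f_i||^sgn | = |λ_j|·| ||f_j||^sgn | = max_e |λ_e|·| ||f_e||^sgn | and sgn(λ_i)||f_i||^sgn · |λ_i| = − sgn(λ_j)||f_j||^sgn · |λ_j|. -/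
noncomputable section

variable {K : Type*} [Field K] [LinearOrder K] [IsStrictOrderedRing K] {V : Type*} [AddCommGroup V] [Module K V]

/-- `av` is a non-Archimedean absolute value. -/
def IsNonarch (av : AbsoluteValue K ℝ) : Prop := ∀ x y : K, av (x + y) ≤ max (av x) (av y)

/-- `av` is compatible with the order on `K`: `0 ≤ a ≤ b` implies `av a ≤ av b`. -/
def Compat (av : AbsoluteValue K ℝ) : Prop := ∀ x y : K, 0 ≤ x → x ≤ y → av x ≤ av y

/-- A signed seminorm on `V` with respect to the absolute value `av` on `K`. -/
def IsSignedSeminorm (av : AbsoluteValue K ℝ) (N : V → ℝ) : Prop :=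
  (∀ (c : K) (v : V), N (c • v) = sgn c * av c * N v) ∧
  (∀ v w : V, min (N v) (N w) ≤ N (v + w) ∧ N (v + w) ≤ max (N v) (N w))

/-!
A relation `∑ λᵢ fᵢ = 0` gives `-(λₖ fₖ) = ∑_{i ≠ k} λᵢ fᵢ` for every `k`. Since a signed seminorm
is odd and the value of a sum lies between the least and the largest value of its summands, the
negative of every value `tₖ = ‖λₖ fₖ‖^sgn` lies between `min t` and `max t`; hence `max t = -min t`.
When `t ≠ 0` this common absolute value is positive, so it is attained at two distinct indices with
opposite signs.
-/

open Finset

omit [IsStrictOrderedRing K] in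
theorem abs_sgn_mul_absoluteValue (av : AbsoluteValue K ℝ) (c : K) : |sgn c * av c| = av c := by
  unfold sgn
  rcases lt_trichotomy 0 c with h | rfl | h
  · simp [h]
  · simp
  · simp [h, not_lt.2 h.le]

namespace IsSignedSeminorm

variable {av : AbsoluteValue K ℝ} {N : V → ℝ}

omit [IsStrictOrderedRing K] in
theorem map_zero (hN : IsSignedSeminorm av N) : N 0 = 0 := by
  simpa [sgn] using hN.1 0 0

theorem map_neg (hN : IsSignedSeminorm av N) (v : V) : N (-v) = -N v := by
  simpa [sgn, zero_le_one.not_gt] using hN.1 (-1) v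

omit [IsStrictOrderedRing K] in
theorem abs_map_smul (hN : IsSignedSeminorm av N) (c : K) (v : V) :
    |N (c • v)| = av c * |N v| := by
  rw [hN.1, abs_mul, abs_sgn_mul_absoluteValue]

omit [IsStrictOrderedRing K] in
theorem map_sum_le (hN : IsSignedSeminorm av N) {ι : Type*} {s : Finset ι} (hs : s.Nonempty)
    {v : ι → V} {c : ℝ} (h : ∀ e ∈ s, N (v e) ≤ c) : N (∑ e ∈ s, v e) ≤ c := by
  induction hs using Finset.Nonempty.cons_induction with
  | singleton a => simpa using h
  | cons a s ha hs ih =>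
    rw [sum_cons]
    exact (hN.2 _ _).2.trans <|
      max_le (h a (mem_cons_self a s)) (ih fun e he => h e (mem_cons_of_mem he))

section Relation

variable {ι : Type*} [Fintype ι] {v : ι → V}

theorem neg_map_le_of_sum_eq_zero (hN : IsSignedSeminorm av N) (hv : ∑ e, v e = 0) {c : ℝ}
    (h : ∀ e, N (v e) ≤ c) (k : ι) : -N (v k) ≤ c := by
  classical
  have hk : -v k = ∑ e ∈ univ.erase k, v e := by
    rw [← add_sum_erase _ _ (mem_univ k)] at hv
    exact neg_eq_of_add_eq_zero_right hv
  rw [← hN.map_neg, hk]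
  rcases (univ.erase k).eq_empty_or_nonempty with hs | hs
  · have hvk : v k = 0 := by simpa [hs] using hk
    simpa [hs, hN.map_zero, hvk] using h k
  · exact hN.map_sum_le hs fun e _ => h e

theorem le_neg_map_of_sum_eq_zero (hN : IsSignedSeminorm av N) (hv : ∑ e, v e = 0) {c : ℝ}
    (h : ∀ e, c ≤ N (v e)) (k : ι) : c ≤ -N (v k) := by
  have := hN.neg_map_le_of_sum_eq_zero (v := fun e => -v e) (by simp [hv]) (c := -c)
    (fun e => by rw [hN.map_neg]; linarith [h e]) k
  rw [hN.map_neg] at this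
  linarith

theorem exists_max_eq_neg_min_of_sum_eq_zero [Nonempty ι] (hN : IsSignedSeminorm av N)
    (hv : ∑ e, v e = 0) :
    ∃ i j, (∀ e, N (v e) ≤ N (v i)) ∧ (∀ e, N (v j) ≤ N (v e)) ∧ N (v i) = -N (v j) := by
  obtain ⟨i, hi⟩ := Finite.exists_max fun e => N (v e)
  obtain ⟨j, hj⟩ := Finite.exists_min fun e => N (v e)
  have hij : N (v j) ≤ -N (v i) := hN.le_neg_map_of_sum_eq_zero hv hj i
  have hji : -N (v j) ≤ N (v i) := hN.neg_map_le_of_sum_eq_zero hv hi j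
  exact ⟨i, j, hi, hj, by linarith⟩

end Relation

end IsSignedSeminorm

theorem signedSeminorm_real_tropical_hyperplane_general {n m : ℕ}
    (av : AbsoluteValue K ℝ)
    (N : Module.Dual K (Fin (n + 1) → K) → ℝ) (hN : IsSignedSeminorm av N)
    (lam : Fin (m + 1) → K) (f : Fin (m + 1) → Module.Dual K (Fin (n + 1) → K))
    (hrel : ∑ i, lam i • f i = 0)
    (hnz : ∃ i, av (lam i) * |N (f i)| ≠ 0) :
    ∃ i j : Fin (m + 1), i ≠ j ∧
      (∀ e, av (lam e) * |N (f e)| ≤ av (lam i) * |N (f i)|) ∧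
      av (lam i) * |N (f i)| = av (lam j) * |N (f j)| ∧
      sgn (lam i) * av (lam i) * N (f i) = -(sgn (lam j) * av (lam j) * N (f j)) := by
  obtain ⟨i, j, hi, hj, hij⟩ := hN.exists_max_eq_neg_min_of_sum_eq_zero hrel
  have habs : ∀ e, |N (lam e • f e)| ≤ N (lam i • f i) := fun e =>
    abs_le.2 ⟨by linarith [hj e], hi e⟩
  have hpos : 0 < N (lam i • f i) := by
    obtain ⟨e, he⟩ := hnz
    rw [← hN.abs_map_smul] at he
    exact (abs_nonneg _).lt_of_ne' he |>.trans_le (habs e)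
  refine ⟨i, j, fun h => by subst h; linarith, fun e => ?_, ?_, ?_⟩
  · rw [← hN.abs_map_smul, ← hN.abs_map_smul, abs_of_pos hpos]
    exact habs e
  · rw [← hN.abs_map_smul, ← hN.abs_map_smul, hij, abs_neg]
  · rw [← hN.1, ← hN.1, hij]

/-- If `Σ λᵢ fᵢ = 0` is a linear relation among functionals whose signed
tropicalization is not identically zero, then the maximum of `|λₑ|·|‖fₑ‖|` is
attained at two indices with opposite signs. -/
theorem signedSeminorm_real_tropical_hyperplane {n m : ℕ}
    (hK : IsRealClosed' K) (av : AbsoluteValue K ℝ) (hna : IsNonarch av) (hcomp : Compat av)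
    (N : Module.Dual K (Fin (n + 1) → K) → ℝ) (hN : IsSignedSeminorm av N)
    (lam : Fin (m + 1) → K) (f : Fin (m + 1) → Module.Dual K (Fin (n + 1) → K))
    (hrel : ∑ i, lam i • f i = 0)
    (hnz : ∃ i, av (lam i) * |N (f i)| ≠ 0) :
    ∃ i j : Fin (m + 1), i ≠ j ∧
      (∀ e, av (lam e) * |N (f e)| ≤ av (lam i) * |N (f i)|) ∧
      av (lam i) * |N (f i)| = av (lam j) * |N (f j)| ∧
      sgn (lam i) * av (lam i) * N (f i) = -(sgn (lam j) * av (lam j) * N (f j)) :=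
  signedSeminorm_real_tropical_hyperplane_general av N hN lam f hrel hnz
end
end
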